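/- arXiv:2406.06770 — 2 statements merged into one kernel-verified Lean document; each statement's English description precedes it below -/
import Mathlib

section
/- Let γ > 0, K > 0, 0 ≤ σ_s < σ_f with σ_s < 1, and let t₁ ∈ ℝ, T > t₁, and x₁ with 0 < x₁ ≤ 1. For each t₂ ∈ [t₁, T] with x₁ - γ K (t₂ - t₁) > 0, let (X_{t₂}, Y_{t₂}) be the solution on [t₂, T] of the SIR system X' = -γ σ_s X Y, Y' = γ σ_s X Y - γ Y with initial data (X_{t₂}(t₂), Y_{t₂}(t₂)) = (x₁ - γ K (t₂ - t₁), K). Then the function t₂ ↦ (∫_{t₂}^{T} (σ_f X_{t₂}(r) - 1)/Y_{t₂}(r) dr - 1/(γ K)) · Y_{t₂}(T) is strictly decreasing; equivalently, t₂ ↦ (σ_f - σ_s) Y_{t₂}(T) ∫_{t₂}^{T} X_{t₂}(r)/Y_{t₂}(r) dr - 1/γ is strictly decreasing. -/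
/-!
On the boundary arc the susceptible fraction decreases at rate `γK`, under strict quarantine
at rate at most `γσₛK < γK`. Hence at time `b` the trajectory that left the arc at `b` has fewer
susceptibles than the one that left at `a`, and, as `y ≤ K` under strict quarantine and
`x ↦ log x - σₛ x` increases on `(0, 1]`, a smaller value of the first integral
`log x - σₛ (x + y)`. Where two strict-quarantine trajectories have the same susceptible
fraction, their first integrals differ by `σₛ (Y_b - Y_a)`, so the ordering of the first
integrals forces `X_b' < X_a'` there; hence `X_b ≤ X_a` on `[b, T]`. Since
`(Y_b / Y_a)' = γσₛ (Y_b / Y_a) (X_b - X_a) ≤ 0`, this gives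
`Y_b(T) X_b / Y_b ≤ Y_a(T) X_a / Y_a` pointwise on `[b, T]`, and the extra piece
`∫_a^b X_a / Y_a > 0` makes the second inequality strict. The first one is the second in
disguise, because `(σₛ x - 1) / y` is the derivative of `-1 / (γ y)` along a trajectory.
-/

open Set Real intervalIntegral

lemma HasDerivWithinAt.Ici_of_Icc {f : ℝ → ℝ} {f' c T x : ℝ}
    (h : HasDerivWithinAt f f' (Icc c T) x) (hx : x ∈ Ico c T) :
    HasDerivWithinAt f f' (Ici x) x :=
  h.mono_of_mem_nhdsWithin <|
    Filter.mem_of_superset (Icc_mem_nhdsGE hx.2) (Icc_subset_Icc_left hx.1)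

lemma eq_left_of_hasDerivWithinAt_Icc_zero {f : ℝ → ℝ} {c T : ℝ}
    (hf : ∀ x ∈ Icc c T, HasDerivWithinAt f 0 (Icc c T) x) : ∀ x ∈ Icc c T, f x = f c :=
  constant_of_has_deriv_right_zero (fun x hx => (hf x hx).continuousWithinAt)
    fun x hx => (hf x (Ico_subset_Icc_self hx)).Ici_of_Icc hx

lemma hasDerivWithinAt_integral_Icc {g : ℝ → ℝ} {c T x : ℝ} (hg : ContinuousOn g (Icc c T))
    (hx : x ∈ Icc c T) : HasDerivWithinAt (fun t => ∫ u in c..t, g u) (g x) (Icc c T) x := by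
  have : Fact (x ∈ Icc c T) := ⟨hx⟩
  exact integral_hasDerivWithinAt_right
    ((hg.mono (Icc_subset_Icc_right hx.2)).intervalIntegrable_of_Icc hx.1)
    (hg.stronglyMeasurableAtFilter_nhdsWithin measurableSet_Icc x) (hg x hx)

lemma eq_mul_exp_integral_of_hasDerivWithinAt {Z g : ℝ → ℝ} {c T : ℝ}
    (hg : ContinuousOn g (Icc c T))
    (hZ : ∀ s ∈ Icc c T, HasDerivWithinAt Z (g s * Z s) (Icc c T) s) :
    ∀ t ∈ Icc c T, Z t = Z c * exp (∫ u in c..t, g u) := by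
  have hconst : ∀ t ∈ Icc c T,
      Z t * exp (-∫ u in c..t, g u) = Z c * exp (-∫ u in c..c, g u) :=
    eq_left_of_hasDerivWithinAt_Icc_zero fun s hs => by
      refine ((hZ s hs).mul (hasDerivWithinAt_integral_Icc hg hs).neg.exp).congr_deriv ?_
      simp only [Pi.neg_apply]
      ring
  intro t ht
  have := hconst t ht
  rw [integral_same, neg_zero, exp_zero, mul_one] at this
  rw [← this, mul_assoc, ← exp_add, neg_add_cancel, exp_zero, mul_one]

noncomputable def sirInvariant (σ x y : ℝ) : ℝ := log x - σ * (x + y)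

lemma sirInvariant_lt_sirInvariant {σ x x' y y' : ℝ} (hσ : 0 ≤ σ) (hσ1 : σ < 1) (hx : 0 < x)
    (hxx' : x < x') (hx' : x' ≤ 1) (hy : y' ≤ y) : sirInvariant σ x y < sirInvariant σ x' y' := by
  have hx'pos : 0 < x' := hx.trans hxx'
  have hlog : 1 - (x' / x)⁻¹ ≤ log (x' / x) := one_sub_inv_le_log_of_pos (div_pos hx'pos hx)
  rw [inv_div, log_div hx'pos.ne' hx.ne'] at hlog
  have hfrac : x' - x ≤ 1 - x / x' := by
    rw [one_sub_div hx'pos.ne', le_div_iff₀ hx'pos]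
    nlinarith
  unfold sirInvariant
  nlinarith [mul_pos (sub_pos.2 hσ1) (sub_pos.2 hxx'), mul_nonneg hσ (sub_nonneg.2 hy)]

structure IsSIRSolution (γ σ c T : ℝ) (X Y : ℝ → ℝ) : Prop where
  hasDerivWithinAt_X : ∀ s ∈ Icc c T, HasDerivWithinAt X (-γ * σ * X s * Y s) (Icc c T) s
  hasDerivWithinAt_Y : ∀ s ∈ Icc c T,
    HasDerivWithinAt Y (γ * σ * X s * Y s - γ * Y s) (Icc c T) s

namespace IsSIRSolution

variable {γ σ c T : ℝ} {X Y : ℝ → ℝ}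

lemma mono (h : IsSIRSolution γ σ c T X Y) {c' : ℝ} (hc : c ≤ c') :
    IsSIRSolution γ σ c' T X Y where
  hasDerivWithinAt_X s hs :=
    (h.hasDerivWithinAt_X s (Icc_subset_Icc_left hc hs)).mono (Icc_subset_Icc_left hc)
  hasDerivWithinAt_Y s hs :=
    (h.hasDerivWithinAt_Y s (Icc_subset_Icc_left hc hs)).mono (Icc_subset_Icc_left hc)

lemma continuousOn_X (h : IsSIRSolution γ σ c T X Y) : ContinuousOn X (Icc c T) :=
  fun s hs => (h.hasDerivWithinAt_X s hs).continuousWithinAt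

lemma continuousOn_Y (h : IsSIRSolution γ σ c T X Y) : ContinuousOn Y (Icc c T) :=
  fun s hs => (h.hasDerivWithinAt_Y s hs).continuousWithinAt

lemma X_eq_mul_exp (h : IsSIRSolution γ σ c T X Y) :
    ∀ t ∈ Icc c T, X t = X c * exp (-(γ * σ * ∫ u in c..t, Y u)) := by
  intro t ht
  rw [← integral_const_mul, ← integral_neg]
  refine eq_mul_exp_integral_of_hasDerivWithinAt (g := fun u => -(γ * σ * Y u))
    (continuousOn_const.mul h.continuousOn_Y).neg (fun s hs => ?_) t ht
  exact (h.hasDerivWithinAt_X s hs).congr_deriv (by ring)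

lemma Y_eq_mul_exp (h : IsSIRSolution γ σ c T X Y) :
    ∀ t ∈ Icc c T, Y t = Y c * exp (∫ u in c..t, γ * (σ * X u - 1)) :=
  eq_mul_exp_integral_of_hasDerivWithinAt
    (continuousOn_const.mul ((continuousOn_const.mul h.continuousOn_X).sub continuousOn_const))
    fun s hs => (h.hasDerivWithinAt_Y s hs).congr_deriv (by ring)

lemma X_pos (h : IsSIRSolution γ σ c T X Y) (hX : 0 < X c) : ∀ t ∈ Icc c T, 0 < X t :=
  fun t ht => by rw [h.X_eq_mul_exp t ht]; positivity

lemma Y_pos (h : IsSIRSolution γ σ c T X Y) (hY : 0 < Y c) : ∀ t ∈ Icc c T, 0 < Y t :=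
  fun t ht => by rw [h.Y_eq_mul_exp t ht]; positivity

lemma integral_Y_nonneg (h : IsSIRSolution γ σ c T X Y) (hY : 0 < Y c) {t : ℝ}
    (ht : t ∈ Icc c T) : 0 ≤ ∫ u in c..t, Y u :=
  integral_nonneg ht.1 fun u hu => (h.Y_pos hY u ⟨hu.1, hu.2.trans ht.2⟩).le

lemma X_le (h : IsSIRSolution γ σ c T X Y) (hγσ : 0 ≤ γ * σ) (hX : 0 ≤ X c) (hY : 0 < Y c) :
    ∀ t ∈ Icc c T, X t ≤ X c := fun t ht => by
  rw [h.X_eq_mul_exp t ht]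
  exact mul_le_of_le_one_right hX <| exp_le_one_iff.2 <|
    neg_nonpos.2 (mul_nonneg hγσ (h.integral_Y_nonneg hY ht))

lemma Y_le (h : IsSIRSolution γ σ c T X Y) (hγ : 0 ≤ γ) (hσ : 0 ≤ σ) (hX : 0 ≤ X c)
    (hσX : σ * X c ≤ 1) (hY : 0 < Y c) : ∀ t ∈ Icc c T, Y t ≤ Y c := fun t ht => by
  have hexp : 0 ≤ ∫ u in c..t, -(γ * (σ * X u - 1)) :=
    integral_nonneg ht.1 fun u hu => by
      have hXu := h.X_le (mul_nonneg hγ hσ) hX hY u ⟨hu.1, hu.2.trans ht.2⟩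
      nlinarith [mul_le_mul_of_nonneg_left hXu hσ]
  rw [integral_neg] at hexp
  rw [h.Y_eq_mul_exp t ht]
  exact mul_le_of_le_one_right hY.le (exp_le_one_iff.2 (neg_nonneg.1 hexp))

lemma mul_one_sub_le_X (h : IsSIRSolution γ σ c T X Y) (hγ : 0 ≤ γ) (hσ : 0 ≤ σ)
    (hX : 0 ≤ X c) (hσX : σ * X c ≤ 1) (hY : 0 < Y c) :
    ∀ t ∈ Icc c T, X c * (1 - γ * σ * Y c * (t - c)) ≤ X t := fun t ht => by
  have hint : ∫ u in c..t, Y u ≤ Y c * (t - c) := by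
    calc ∫ u in c..t, Y u ≤ ∫ _ in c..t, Y c :=
          integral_mono_on ht.1
            ((h.continuousOn_Y.mono (Icc_subset_Icc_right ht.2)).intervalIntegrable_of_Icc ht.1)
            intervalIntegrable_const
            fun u hu => h.Y_le hγ hσ hX hσX hY u ⟨hu.1, hu.2.trans ht.2⟩
      _ = Y c * (t - c) := by rw [integral_const, smul_eq_mul, mul_comm]
  rw [h.X_eq_mul_exp t ht]
  refine mul_le_mul_of_nonneg_left ?_ hX
  nlinarith [add_one_le_exp (-(γ * σ * ∫ u in c..t, Y u)), mul_nonneg hγ hσ]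

lemma sirInvariant_eq (h : IsSIRSolution γ σ c T X Y) (hX : 0 < X c) :
    ∀ t ∈ Icc c T, sirInvariant σ (X t) (Y t) = sirInvariant σ (X c) (Y c) :=
  eq_left_of_hasDerivWithinAt_Icc_zero fun s hs => by
    have hXs := (h.X_pos hX s hs).ne'
    refine (((h.hasDerivWithinAt_X s hs).log hXs).sub
      (((h.hasDerivWithinAt_X s hs).add (h.hasDerivWithinAt_Y s hs)).const_mul σ)).congr_deriv ?_
    field_simp
    ring

lemma continuousOn_X_div_Y (h : IsSIRSolution γ σ c T X Y) (hY : 0 < Y c) :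
    ContinuousOn (fun t => X t / Y t) (Icc c T) :=
  h.continuousOn_X.div h.continuousOn_Y fun t ht => (h.Y_pos hY t ht).ne'

lemma continuousOn_mul_X_sub_one_div_Y (h : IsSIRSolution γ σ c T X Y) (hY : 0 < Y c)
    (σ' : ℝ) : ContinuousOn (fun t => (σ' * X t - 1) / Y t) (Icc c T) :=
  ((continuousOn_const.mul h.continuousOn_X).sub continuousOn_const).div h.continuousOn_Y
    fun t ht => (h.Y_pos hY t ht).ne'

lemma integral_div_Y_eq (h : IsSIRSolution γ σ c T X Y) (hγ : γ ≠ 0) (hY : 0 < Y c)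
    (hcT : c ≤ T) :
    ∫ u in c..T, (σ * X u - 1) / Y u = 1 / (γ * Y c) - 1 / (γ * Y T) := by
  have hconst := eq_left_of_hasDerivWithinAt_Icc_zero
    (f := fun t => (∫ u in c..t, (σ * X u - 1) / Y u) + (γ * Y t)⁻¹) fun s hs => by
      have hYs := (h.Y_pos hY s hs).ne'
      refine ((hasDerivWithinAt_integral_Icc (h.continuousOn_mul_X_sub_one_div_Y hY σ) hs).add
        (((h.hasDerivWithinAt_Y s hs).const_mul γ).inv (by positivity))).congr_deriv ?_
      field_simp
      ring
  have := hconst T ⟨hcT, le_rfl⟩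
  simp only [integral_same, zero_add] at this
  rw [one_div, one_div]
  linarith

lemma integral_sub_one_div_mul_Y_eq (h : IsSIRSolution γ σ c T X Y) (hγ : γ ≠ 0)
    (hY : 0 < Y c) (hcT : c ≤ T) (σ' : ℝ) :
    ((∫ u in c..T, (σ' * X u - 1) / Y u) - 1 / (γ * Y c)) * Y T
      = (σ' - σ) * Y T * (∫ u in c..T, X u / Y u) - 1 / γ := by
  have hint : IntervalIntegrable (fun u => X u / Y u) MeasureTheory.volume c T :=
    (h.continuousOn_X_div_Y hY).intervalIntegrable_of_Icc hcT
  have hint' : IntervalIntegrable (fun u => (σ * X u - 1) / Y u) MeasureTheory.volume c T :=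
    (h.continuousOn_mul_X_sub_one_div_Y hY σ).intervalIntegrable_of_Icc hcT
  have hsplit : ∫ u in c..T, (σ' * X u - 1) / Y u
      = (σ' - σ) * (∫ u in c..T, X u / Y u) + ∫ u in c..T, (σ * X u - 1) / Y u := by
    rw [← integral_const_mul, ← integral_add (hint.const_mul _) hint']
    congr 1
    ext u
    ring
  have hYT := (h.Y_pos hY T ⟨hcT, le_rfl⟩).ne'
  rw [hsplit, h.integral_div_Y_eq hγ hY hcT]
  field_simp
  ring

lemma X_le_of_sirInvariant_lt {X₁ Y₁ X₂ Y₂ : ℝ → ℝ} (h₁ : IsSIRSolution γ σ c T X₁ Y₁)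
    (h₂ : IsSIRSolution γ σ c T X₂ Y₂) (hγ : 0 < γ) (hX₂ : 0 < X₂ c) (hX : X₂ c ≤ X₁ c)
    (hinv : sirInvariant σ (X₂ c) (Y₂ c) < sirInvariant σ (X₁ c) (Y₁ c)) :
    ∀ t ∈ Icc c T, X₂ t ≤ X₁ t :=
  image_le_of_deriv_right_lt_deriv_boundary' h₂.continuousOn_X
    (fun x hx => (h₂.hasDerivWithinAt_X x (Ico_subset_Icc_self hx)).Ici_of_Icc hx) hX
    h₁.continuousOn_X
    (fun x hx => (h₁.hasDerivWithinAt_X x (Ico_subset_Icc_self hx)).Ici_of_Icc hx)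
    fun x hx hx₁₂ => by
      have hx' := Ico_subset_Icc_self hx
      have hinv₁ := h₁.sirInvariant_eq (hX₂.trans_le hX) x hx'
      have hinv₂ := h₂.sirInvariant_eq hX₂ x hx'
      have hX₂x := h₂.X_pos hX₂ x hx'
      unfold sirInvariant at hinv hinv₁ hinv₂
      rw [hx₁₂] at hinv₂ hX₂x ⊢
      -- at a contact point the invariants differ only through `σ Y`
      have hY : 0 < σ * Y₂ x - σ * Y₁ x := by linarith
      nlinarith [mul_pos (mul_pos hγ hX₂x) hY]

lemma Y_div_Y_antitoneOn {X₁ Y₁ X₂ Y₂ : ℝ → ℝ} (h₁ : IsSIRSolution γ σ c T X₁ Y₁)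
    (h₂ : IsSIRSolution γ σ c T X₂ Y₂) (hγσ : 0 ≤ γ * σ) (hY₁ : 0 < Y₁ c) (hY₂ : 0 < Y₂ c)
    (hX : ∀ t ∈ Icc c T, X₂ t ≤ X₁ t) :
    AntitoneOn (fun t => Y₂ t / Y₁ t) (Icc c T) := by
  refine antitoneOn_of_hasDerivWithinAt_nonpos
    (f' := fun x => γ * σ * (Y₂ x / Y₁ x) * (X₂ x - X₁ x)) (convex_Icc c T)
    (h₂.continuousOn_Y.div h₁.continuousOn_Y fun t ht => (h₁.Y_pos hY₁ t ht).ne')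
    (fun x hx => ?_) (fun x hx => ?_) <;> simp only [interior_Icc] at hx ⊢ <;>
    have hx' := Ioo_subset_Icc_self hx
  · have hY₁x := (h₁.Y_pos hY₁ x hx').ne'
    refine (((h₂.hasDerivWithinAt_Y x hx').div (h₁.hasDerivWithinAt_Y x hx') hY₁x).mono
      Ioo_subset_Icc_self).congr_deriv ?_
    field_simp
    ring
  · exact mul_nonpos_of_nonneg_of_nonpos
      (mul_nonneg hγσ (div_pos (h₂.Y_pos hY₂ x hx') (h₁.Y_pos hY₁ x hx')).le)
      (sub_nonpos.2 (hX x hx'))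

lemma mul_integral_X_div_Y_le {X₁ Y₁ X₂ Y₂ : ℝ → ℝ} (h₁ : IsSIRSolution γ σ c T X₁ Y₁)
    (h₂ : IsSIRSolution γ σ c T X₂ Y₂) (hγσ : 0 ≤ γ * σ) (hcT : c ≤ T) (hX₂ : 0 < X₂ c)
    (hY₁ : 0 < Y₁ c) (hY₂ : 0 < Y₂ c) (hX : ∀ t ∈ Icc c T, X₂ t ≤ X₁ t) :
    Y₂ T * (∫ u in c..T, X₂ u / Y₂ u) ≤ Y₁ T * ∫ u in c..T, X₁ u / Y₁ u := by
  have hT : T ∈ Icc c T := ⟨hcT, le_rfl⟩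
  rw [← integral_const_mul, ← integral_const_mul]
  refine integral_mono_on hcT
    ((continuousOn_const.mul (h₂.continuousOn_X_div_Y hY₂)).intervalIntegrable_of_Icc hcT)
    ((continuousOn_const.mul (h₁.continuousOn_X_div_Y hY₁)).intervalIntegrable_of_Icc hcT)
    fun u hu => ?_
  have hY₁u := h₁.Y_pos hY₁ u hu
  have hY₂u := h₂.Y_pos hY₂ u hu
  have hratio : Y₂ T / Y₂ u ≤ Y₁ T / Y₁ u := by
    have := h₁.Y_div_Y_antitoneOn h₂ hγσ hY₁ hY₂ hX hu hT hu.2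
    rw [div_le_div_iff₀ (h₁.Y_pos hY₁ T hT) hY₁u] at this
    rw [div_le_div_iff₀ hY₂u hY₁u]
    linarith
  calc Y₂ T * (X₂ u / Y₂ u) = X₂ u * (Y₂ T / Y₂ u) := by ring
    _ ≤ X₁ u * (Y₁ T / Y₁ u) :=
      mul_le_mul (hX u hu) hratio (div_pos (h₂.Y_pos hY₂ T hT) hY₂u).le
        ((h₂.X_pos hX₂ u hu).le.trans (hX u hu))
    _ = Y₁ T * (X₁ u / Y₁ u) := by ring

lemma sub_mul_lt_X (h : IsSIRSolution γ σ c T X Y) (hγ : 0 < γ) (hσ : 0 ≤ σ) (hσ1 : σ < 1)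
    (hX : 0 < X c) (hX1 : X c ≤ 1) (hY : 0 < Y c) {t : ℝ} (ht : t ∈ Ioc c T) :
    X c - γ * Y c * (t - c) < X t := by
  have hσX : σ * X c < 1 := by nlinarith
  have := h.mul_one_sub_le_X hγ.le hσ hX.le hσX.le hY t (Ioc_subset_Icc_self ht)
  nlinarith [mul_pos (mul_pos (mul_pos hγ hY) (sub_pos.2 ht.1)) (sub_pos.2 hσX)]

lemma sirInvariant_sub_mul_lt (h : IsSIRSolution γ σ c T X Y) (hγ : 0 < γ) (hσ : 0 ≤ σ)
    (hσ1 : σ < 1) (hX1 : X c ≤ 1) (hY : 0 < Y c) {t : ℝ} (ht : t ∈ Ioc c T)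
    (hXt : 0 < X c - γ * Y c * (t - c)) :
    sirInvariant σ (X c - γ * Y c * (t - c)) (Y c) < sirInvariant σ (X t) (Y t) := by
  have hX : 0 < X c := by nlinarith [mul_pos (mul_pos hγ hY) (sub_pos.2 ht.1)]
  have ht' := Ioc_subset_Icc_self ht
  exact sirInvariant_lt_sirInvariant hσ hσ1 hXt (h.sub_mul_lt_X hγ hσ hσ1 hX hX1 hY ht)
    ((h.X_le (mul_nonneg hγ.le hσ) hX.le hY t ht').trans hX1)
    (h.Y_le hγ.le hσ hX.le (by nlinarith) hY t ht')

lemma integral_X_div_Y_lt (h : IsSIRSolution γ σ c T X Y) (hX : 0 < X c) (hY : 0 < Y c)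
    {b : ℝ} (hcb : c < b) (hbT : b ≤ T) :
    ∫ u in b..T, X u / Y u < ∫ u in c..T, X u / Y u := by
  have hint : IntervalIntegrable (fun u => X u / Y u) MeasureTheory.volume c T :=
    (h.continuousOn_X_div_Y hY).intervalIntegrable_of_Icc (hcb.le.trans hbT)
  have hbu : b ∈ uIcc c T := mem_uIcc_of_le hcb.le hbT
  have hhead : 0 < ∫ u in c..b, X u / Y u :=
    intervalIntegral_pos_of_pos_on (hint.mono_set (uIcc_subset_uIcc_left hbu))
      (fun u hu => div_pos (h.X_pos hX u ⟨hu.1.le, hu.2.le.trans hbT⟩)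
        (h.Y_pos hY u ⟨hu.1.le, hu.2.le.trans hbT⟩)) hcb
  rw [← integral_add_adjacent_intervals (hint.mono_set (uIcc_subset_uIcc_left hbu))
    (hint.mono_set (uIcc_subset_uIcc_right hbu))]
  linarith

end IsSIRSolution

theorem boundary_exit_quantity_strictly_decreasing_general
    (γ K σs σf t₁ T x₁ : ℝ) (hγ : 0 < γ) (hK : 0 < K)
    (hσs : 0 ≤ σs) (hσsf : σs < σf) (hσs1 : σs < 1)
    (hx₁le : x₁ ≤ 1)
    (a b : ℝ) (ha : a ∈ Icc t₁ T) (hb : b ∈ Icc t₁ T) (hab : a < b)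
    (hxa : 0 < x₁ - γ * K * (a - t₁)) (hxb : 0 < x₁ - γ * K * (b - t₁))
    (Xa Ya Xb Yb : ℝ → ℝ)
    (hXa : ∀ s ∈ Icc a T, HasDerivWithinAt Xa (-γ * σs * Xa s * Ya s) (Icc a T) s)
    (hYa : ∀ s ∈ Icc a T,
      HasDerivWithinAt Ya (γ * σs * Xa s * Ya s - γ * Ya s) (Icc a T) s)
    (hXa0 : Xa a = x₁ - γ * K * (a - t₁)) (hYa0 : Ya a = K)
    (hXb : ∀ s ∈ Icc b T, HasDerivWithinAt Xb (-γ * σs * Xb s * Yb s) (Icc b T) s)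
    (hYb : ∀ s ∈ Icc b T,
      HasDerivWithinAt Yb (γ * σs * Xb s * Yb s - γ * Yb s) (Icc b T) s)
    (hXb0 : Xb b = x₁ - γ * K * (b - t₁)) (hYb0 : Yb b = K) :
    ((∫ r in b..T, (σf * Xb r - 1) / Yb r) - 1 / (γ * K)) * Yb T
      < ((∫ r in a..T, (σf * Xa r - 1) / Ya r) - 1 / (γ * K)) * Ya T ∧
    (σf - σs) * Yb T * (∫ r in b..T, Xb r / Yb r) - 1 / γ
      < (σf - σs) * Ya T * (∫ r in a..T, Xa r / Ya r) - 1 / γ := by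
  have Sa : IsSIRSolution γ σs a T Xa Ya := ⟨hXa, hYa⟩
  have Sb : IsSIRSolution γ σs b T Xb Yb := ⟨hXb, hYb⟩
  have hXa0pos : 0 < Xa a := hXa0 ▸ hxa
  have hYa0pos : 0 < Ya a := hYa0 ▸ hK
  have hXa1 : Xa a ≤ 1 := by
    rw [hXa0]; nlinarith [mul_nonneg (mul_pos hγ hK).le (sub_nonneg.2 ha.1)]
  have hbIoc : b ∈ Ioc a T := ⟨hab, hb.2⟩
  have harc : Xb b = Xa a - γ * Ya a * (b - a) := by rw [hXb0, hXa0, hYa0]; ring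
  have hXab : Xb b < Xa b := harc ▸ Sa.sub_mul_lt_X hγ hσs hσs1 hXa0pos hXa1 hYa0pos hbIoc
  have hinv : sirInvariant σs (Xb b) (Yb b) < sirInvariant σs (Xa b) (Ya b) := by
    rw [harc, hYb0, ← hYa0]
    exact Sa.sirInvariant_sub_mul_lt hγ hσs hσs1 hXa1 hYa0pos hbIoc (harc ▸ hXb0 ▸ hxb)
  have Sab := Sa.mono hab.le
  have hXb0pos : 0 < Xb b := hXb0 ▸ hxb
  have hYb0pos : 0 < Yb b := hYb0 ▸ hK
  have hmono : Yb T * (∫ r in b..T, Xb r / Yb r) < Ya T * ∫ r in a..T, Xa r / Ya r :=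
    (Sab.mul_integral_X_div_Y_le Sb (mul_nonneg hγ.le hσs) hb.2 hXb0pos
      (Sa.Y_pos hYa0pos b (Ioc_subset_Icc_self hbIoc)) hYb0pos
      (Sab.X_le_of_sirInvariant_lt Sb hγ hXb0pos hXab.le hinv)).trans_lt
    (mul_lt_mul_of_pos_left (Sa.integral_X_div_Y_lt hXa0pos hYa0pos hab hb.2)
      (Sa.Y_pos hYa0pos T ⟨ha.2, le_rfl⟩))
  have hsecond := mul_lt_mul_of_pos_left hmono (sub_pos.2 hσsf)
  have hIa := Sa.integral_sub_one_div_mul_Y_eq hγ.ne' hYa0pos ha.2 σf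
  have hIb := Sb.integral_sub_one_div_mul_Y_eq hγ.ne' hYb0pos hb.2 σf
  rw [hYa0] at hIa
  rw [hYb0] at hIb
  rw [hIa, hIb]
  rw [← mul_assoc, ← mul_assoc] at hsecond
  exact ⟨by linarith, by linarith⟩

/-- Monotonicity used in the lemma on the interval `[t_c, t_f]`: for exit times `a < b`
from the boundary arc `y = K`, with subsequent strict quarantine (reproduction number
`σ_s`) until the final time `T`, the quantity
`(∫_{t₂}^T (σ_f x - 1)/y - 1/(γK)) · y(T)`, equivalently
`(σ_f - σ_s) y(T) ∫_{t₂}^T x/y - 1/γ`, is strictly decreasing in `t₂`. -/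
theorem boundary_exit_quantity_strictly_decreasing
    (γ K σs σf t₁ T x₁ : ℝ) (hγ : 0 < γ) (hK : 0 < K)
    (hσs : 0 ≤ σs) (hσsf : σs < σf) (hσs1 : σs < 1)
    (hT : t₁ < T) (hx₁pos : 0 < x₁) (hx₁le : x₁ ≤ 1)
    (a b : ℝ) (ha : a ∈ Icc t₁ T) (hb : b ∈ Icc t₁ T) (hab : a < b)
    (hxa : 0 < x₁ - γ * K * (a - t₁)) (hxb : 0 < x₁ - γ * K * (b - t₁))
    (Xa Ya Xb Yb : ℝ → ℝ)
    (hXa : ∀ s ∈ Icc a T, HasDerivWithinAt Xa (-γ * σs * Xa s * Ya s) (Icc a T) s)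
    (hYa : ∀ s ∈ Icc a T,
      HasDerivWithinAt Ya (γ * σs * Xa s * Ya s - γ * Ya s) (Icc a T) s)
    (hXa0 : Xa a = x₁ - γ * K * (a - t₁)) (hYa0 : Ya a = K)
    (hXb : ∀ s ∈ Icc b T, HasDerivWithinAt Xb (-γ * σs * Xb s * Yb s) (Icc b T) s)
    (hYb : ∀ s ∈ Icc b T,
      HasDerivWithinAt Yb (γ * σs * Xb s * Yb s - γ * Yb s) (Icc b T) s)
    (hXb0 : Xb b = x₁ - γ * K * (b - t₁)) (hYb0 : Yb b = K) :
    ((∫ r in b..T, (σf * Xb r - 1) / Yb r) - 1 / (γ * K)) * Yb T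
      < ((∫ r in a..T, (σf * Xa r - 1) / Ya r) - 1 / (γ * K)) * Ya T ∧
    (σf - σs) * Yb T * (∫ r in b..T, Xb r / Yb r) - 1 / γ
      < (σf - σs) * Ya T * (∫ r in a..T, Xa r / Ya r) - 1 / γ :=
  boundary_exit_quantity_strictly_decreasing_general γ K σs σf t₁ T x₁ hγ hK hσs hσsf hσs1 hx₁le a b
    ha hb hab hxa hxb Xa Ya Xb Yb hXa hYa hXa0 hYa0 hXb hYb hXb0 hYb0
end

section
/- Let γ > 0, 0 ≤ σ_s < σ_f, and t₂ ≤ t₃ < t₃' ≤ T. Let (x₂, y₂) ∈ D. For θ ∈ {t₃, t₃'}, let (x_θ, y_θ) be the solution on [t₂, T] of the SIR system x' = -γ σ(t) x y, y' = γ σ(t) x y - γ y with (x_θ(t₂), y_θ(t₂)) = (x₂, y₂) and control σ(t) = σ_s for t ∈ [t₂, θ], σ(t) = σ_f for t ∈ (θ, T]; and let z_θ be the unique z ∈ (0, 1/σ_f) satisfying z · exp(-σ_f z) = x_θ(T) · exp(-σ_f (x_θ(T) + y_θ(T))). Then z_{t₃} < z_{t₃'}; that is, extending the duration of the strict quarantine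 strictly increases the asymptotic fraction of susceptibles. -/
/-!
Along an SIR trajectory with control `σ`, the quantity `log x - σf (x + y)` has derivative
`γ (σf - σ) y`: it is conserved while the control is `σf` and strictly increases while it is
`σs < σf`. By uniqueness the two trajectories agree up to `t₃`, so at time `T` this quantity is
larger for the longer quarantine. Since `log z - σf z` equals it at `z = x_∞`, and
`z ↦ z e^{-σf z}` is strictly increasing on `[0, 1/σf]`, the claim follows.
-/

open Set Real

theorem eq_of_forall_hasDerivWithinAt_Icc_zero {E : Type*} [NormedAddCommGroup E]
    [NormedSpace ℝ E] {f : ℝ → E} {a b : ℝ}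
    (hf : ∀ x ∈ Icc a b, HasDerivWithinAt f 0 (Icc a b) x) : ∀ x ∈ Icc a b, f x = f a := by
  simpa only [zero_mul, norm_le_zero_iff, sub_eq_zero] using
    norm_image_sub_le_of_norm_deriv_le_segment' hf fun _ _ => norm_zero.le

theorem pos_of_forall_hasDerivWithinAt_mul {y b : ℝ → ℝ} {a c : ℝ}
    (hb : ContinuousOn b (Icc a c))
    (hy : ∀ t ∈ Icc a c, HasDerivWithinAt y (b t * y t) (Icc a c) t) (ha : 0 < y a) :
    ∀ t ∈ Icc a c, 0 < y t := by
  intro t ht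
  have hac : a ≤ c := ht.1.trans ht.2
  set b' := IccExtend hac ((Icc a c).domRestrict b)
  have hb' : Continuous b' := hb.domRestrict.Icc_extend'
  set B := fun u => ∫ s in a..u, b' s
  -- `y * exp (-B)` is constant, where `B` is a primitive of a continuous extension of `b`
  have hw : ∀ u ∈ Icc a c, HasDerivWithinAt (fun u => y u * exp (-B u)) 0 (Icc a c) u := by
    intro u hu
    have hB := (hb'.integral_hasStrictDerivAt a u).hasDerivAt.hasDerivWithinAt (s := Icc a c)
    refine ((hy u hu).mul hB.neg.exp).congr_deriv ?_
    simp only [b', IccExtend_of_mem _ _ hu, domRestrict_apply]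
    ring
  have hconst := eq_of_forall_hasDerivWithinAt_Icc_zero hw t ht
  simp only [B, intervalIntegral.integral_same, neg_zero, exp_zero, mul_one] at hconst
  rw [← hconst] at ha
  exact pos_of_mul_pos_left ha (exp_pos _).le

theorem ODE_solution_unique_of_locallyLipschitz {E : Type*} [NormedAddCommGroup E]
    [NormedSpace ℝ E] {v : E → E} (hv : LocallyLipschitz v) {f g : ℝ → E} {a b : ℝ}
    (hf : ∀ t ∈ Icc a b, HasDerivWithinAt f (v (f t)) (Icc a b) t)
    (hg : ∀ t ∈ Icc a b, HasDerivWithinAt g (v (g t)) (Icc a b) t) (ha : f a = g a) :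
    EqOn f g (Icc a b) := by
  have hfc : ContinuousOn f (Icc a b) := fun t ht => (hf t ht).continuousWithinAt
  have hgc : ContinuousOn g (Icc a b) := fun t ht => (hg t ht).continuousWithinAt
  set K := f '' Icc a b ∪ g '' Icc a b
  have hK : IsCompact K :=
    (isCompact_Icc.image_of_continuousOn hfc).union (isCompact_Icc.image_of_continuousOn hgc)
  obtain ⟨L, hL⟩ := hv.locallyLipschitzOn.exists_lipschitzOnWith_of_compact hK
  exact ODE_solution_unique_of_mem_Icc_right (v := fun _ => v) (s := fun _ => K)
    (fun _ _ => hL) hfc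
    (fun t ht => (hf t (Ico_subset_Icc_self ht)).mono_of_mem_nhdsWithin
      (Icc_mem_nhdsGE_of_mem ht))
    (fun t ht => .inl (mem_image_of_mem f (Ico_subset_Icc_self ht))) hgc
    (fun t ht => (hg t (Ico_subset_Icc_self ht)).mono_of_mem_nhdsWithin
      (Icc_mem_nhdsGE_of_mem ht))
    (fun t ht => .inr (mem_image_of_mem g (Ico_subset_Icc_self ht))) ha

theorem strictMonoOn_mul_exp_neg_mul {σ : ℝ} (hσ : 0 < σ) :
    StrictMonoOn (fun z => z * exp (-σ * z)) (Icc 0 σ⁻¹) := by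
  refine strictMonoOn_of_hasDerivWithinAt_pos (convex_Icc _ _) (by fun_prop)
    (f' := fun z => exp (-σ * z) * (1 - σ * z)) (fun z _ => ?_) (fun z hz => ?_)
  · refine ((hasDerivAt_id' z).mul ((hasDerivAt_id' z).const_mul (-σ)).exp).hasDerivWithinAt
      |>.congr_deriv ?_
    ring
  · rw [interior_Icc] at hz
    have hσz : σ * z < 1 := by simpa [hσ.ne'] using mul_lt_mul_of_pos_left hz.2 hσ
    have : 0 < 1 - σ * z := by linarith
    positivity

namespace SIR

structure IsSolution (γ σ : ℝ) (X Y : ℝ → ℝ) (s : Set ℝ) : Prop where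
  hasDerivWithinAt_x : ∀ t ∈ s, HasDerivWithinAt X (-γ * σ * X t * Y t) s t
  hasDerivWithinAt_y : ∀ t ∈ s, HasDerivWithinAt Y (γ * σ * X t * Y t - γ * Y t) s t

noncomputable def invariant (σ x y : ℝ) : ℝ := log x - σ * (x + y)

theorem mul_exp_neg_mul_add_eq_exp_invariant {x : ℝ} (σ y : ℝ) (hx : 0 < x) :
    x * exp (-σ * (x + y)) = exp (invariant σ x y) := by
  rw [invariant, exp_sub, exp_log hx, div_eq_mul_inv, ← exp_neg, neg_mul]

variable {γ σ : ℝ} {X Y : ℝ → ℝ}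

theorem IsSolution.mono {s t : Set ℝ} (h : IsSolution γ σ X Y s) (hts : t ⊆ s) :
    IsSolution γ σ X Y t where
  hasDerivWithinAt_x u hu := (h.hasDerivWithinAt_x u (hts hu)).mono hts
  hasDerivWithinAt_y u hu := (h.hasDerivWithinAt_y u (hts hu)).mono hts

variable {a c : ℝ}

theorem IsSolution.x_pos (h : IsSolution γ σ X Y (Icc a c)) (ha : 0 < X a) :
    ∀ t ∈ Icc a c, 0 < X t :=
  pos_of_forall_hasDerivWithinAt_mul (b := fun t => -γ * σ * Y t)
    (continuousOn_const.mul fun t ht => (h.hasDerivWithinAt_y t ht).continuousWithinAt)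
    (fun t ht => (h.hasDerivWithinAt_x t ht).congr_deriv (by ring)) ha

theorem IsSolution.y_pos (h : IsSolution γ σ X Y (Icc a c)) (ha : 0 < Y a) :
    ∀ t ∈ Icc a c, 0 < Y t :=
  pos_of_forall_hasDerivWithinAt_mul (b := fun t => γ * σ * X t - γ)
    ((continuousOn_const.mul fun t ht => (h.hasDerivWithinAt_x t ht).continuousWithinAt).sub
      continuousOn_const)
    (fun t ht => (h.hasDerivWithinAt_y t ht).congr_deriv (by ring)) ha

theorem IsSolution.eqOn {X' Y' : ℝ → ℝ} (h : IsSolution γ σ X Y (Icc a c))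
    (h' : IsSolution γ σ X' Y' (Icc a c)) (hx : X a = X' a) (hy : Y a = Y' a) :
    EqOn X X' (Icc a c) ∧ EqOn Y Y' (Icc a c) := by
  have hv : LocallyLipschitz fun p : ℝ × ℝ =>
      (-γ * σ * p.1 * p.2, γ * σ * p.1 * p.2 - γ * p.2) :=
    ContDiff.locallyLipschitz (𝕂 := ℝ) (by fun_prop)
  have hXY := ODE_solution_unique_of_locallyLipschitz hv (f := fun t => (X t, Y t))
    (g := fun t => (X' t, Y' t))
    (fun t ht => (h.hasDerivWithinAt_x t ht).prodMk (h.hasDerivWithinAt_y t ht))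
    (fun t ht => (h'.hasDerivWithinAt_x t ht).prodMk (h'.hasDerivWithinAt_y t ht))
    (by rw [hx, hy])
  exact ⟨fun t ht => congrArg Prod.fst (hXY ht), fun t ht => congrArg Prod.snd (hXY ht)⟩

theorem IsSolution.hasDerivWithinAt_invariant {s : Set ℝ} {t : ℝ} (h : IsSolution γ σ X Y s)
    (σ' : ℝ) (ht : t ∈ s) (hX : X t ≠ 0) :
    HasDerivWithinAt (fun u => invariant σ' (X u) (Y u)) (γ * (σ' - σ) * Y t) s t := by
  have hx := h.hasDerivWithinAt_x t ht
  refine ((hx.log hX).sub ((hx.add (h.hasDerivWithinAt_y t ht)).const_mul σ')).congr_deriv ?_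
  field_simp
  ring

theorem IsSolution.invariant_eq (h : IsSolution γ σ X Y (Icc a c)) (ha : 0 < X a) :
    ∀ t ∈ Icc a c, invariant σ (X t) (Y t) = invariant σ (X a) (Y a) :=
  eq_of_forall_hasDerivWithinAt_Icc_zero fun t ht =>
    (h.hasDerivWithinAt_invariant σ ht (h.x_pos ha t ht).ne').congr_deriv (by ring)

theorem IsSolution.strictMonoOn_invariant {σ' : ℝ} (h : IsSolution γ σ X Y (Icc a c))
    (hγ : 0 < γ) (hσ : σ < σ') (hXa : 0 < X a) (hYa : 0 < Y a) :
    StrictMonoOn (fun t => invariant σ' (X t) (Y t)) (Icc a c) := by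
  have hderiv t (ht : t ∈ Icc a c) := h.hasDerivWithinAt_invariant σ' ht (h.x_pos hXa t ht).ne'
  refine strictMonoOn_of_hasDerivWithinAt_pos (convex_Icc a c)
    (f' := fun t => γ * (σ' - σ) * Y t)
    (fun t ht => (hderiv t ht).continuousWithinAt) (fun t ht => ?_) (fun t ht => ?_)
  · exact (hderiv t (interior_subset ht)).mono interior_subset
  · have hYt := h.y_pos hYa t (interior_subset ht)
    have hσσ' : 0 < σ' - σ := sub_pos.2 hσ
    positivity

end SIR

theorem longer_strict_quarantine_increases_xinf_general
    (γ σs σf t₂ t₃ t₃' T : ℝ) (hγ : 0 < γ) (hσs : 0 ≤ σs) (hσsf : σs < σf)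
    (ht₂ : t₂ ≤ t₃) (ht₃ : t₃ < t₃') (ht₃' : t₃' ≤ T)
    (x₂ y₂ : ℝ) (hx₂ : 0 < x₂) (hy₂ : 0 < y₂)
    (X₁ Y₁ X₂ Y₂ : ℝ → ℝ)
    (hX₁s : ∀ t ∈ Icc t₂ t₃,
      HasDerivWithinAt X₁ (-γ * σs * X₁ t * Y₁ t) (Icc t₂ t₃) t)
    (hY₁s : ∀ t ∈ Icc t₂ t₃,
      HasDerivWithinAt Y₁ (γ * σs * X₁ t * Y₁ t - γ * Y₁ t) (Icc t₂ t₃) t)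
    (hX₁f : ∀ t ∈ Icc t₃ T,
      HasDerivWithinAt X₁ (-γ * σf * X₁ t * Y₁ t) (Icc t₃ T) t)
    (hY₁f : ∀ t ∈ Icc t₃ T,
      HasDerivWithinAt Y₁ (γ * σf * X₁ t * Y₁ t - γ * Y₁ t) (Icc t₃ T) t)
    (hX₁0 : X₁ t₂ = x₂) (hY₁0 : Y₁ t₂ = y₂)
    (hX₂s : ∀ t ∈ Icc t₂ t₃',
      HasDerivWithinAt X₂ (-γ * σs * X₂ t * Y₂ t) (Icc t₂ t₃') t)
    (hY₂s : ∀ t ∈ Icc t₂ t₃',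
      HasDerivWithinAt Y₂ (γ * σs * X₂ t * Y₂ t - γ * Y₂ t) (Icc t₂ t₃') t)
    (hX₂f : ∀ t ∈ Icc t₃' T,
      HasDerivWithinAt X₂ (-γ * σf * X₂ t * Y₂ t) (Icc t₃' T) t)
    (hY₂f : ∀ t ∈ Icc t₃' T,
      HasDerivWithinAt Y₂ (γ * σf * X₂ t * Y₂ t - γ * Y₂ t) (Icc t₃' T) t)
    (hX₂0 : X₂ t₂ = x₂) (hY₂0 : Y₂ t₂ = y₂)
    (z₁ z₂ : ℝ)
    (hz₁ : z₁ ∈ Ioo 0 (1 / σf) ∧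
      z₁ * Real.exp (-σf * z₁) = X₁ T * Real.exp (-σf * (X₁ T + Y₁ T)))
    (hz₂ : z₂ ∈ Ioo 0 (1 / σf) ∧
      z₂ * Real.exp (-σf * z₂) = X₂ T * Real.exp (-σf * (X₂ T + Y₂ T))) :
    z₁ < z₂ := by
  have sol₁s : SIR.IsSolution γ σs X₁ Y₁ (Icc t₂ t₃) := ⟨hX₁s, hY₁s⟩
  have sol₁f : SIR.IsSolution γ σf X₁ Y₁ (Icc t₃ T) := ⟨hX₁f, hY₁f⟩
  have sol₂s : SIR.IsSolution γ σs X₂ Y₂ (Icc t₂ t₃') := ⟨hX₂s, hY₂s⟩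
  have sol₂f : SIR.IsSolution γ σf X₂ Y₂ (Icc t₃' T) := ⟨hX₂f, hY₂f⟩
  have hX₂pos := sol₂s.x_pos (hX₂0 ▸ hx₂)
  have hY₂pos := sol₂s.y_pos (hY₂0 ▸ hy₂)
  have ht₃mem : t₃ ∈ Icc t₂ t₃' := ⟨ht₂, ht₃.le⟩
  obtain ⟨hX, hY⟩ := sol₁s.eqOn (sol₂s.mono (Icc_subset_Icc_right ht₃.le))
    (hX₁0.trans hX₂0.symm) (hY₁0.trans hY₂0.symm)
  have hX₁t₃ : 0 < X₁ t₃ := hX (right_mem_Icc.2 ht₂) ▸ hX₂pos t₃ ht₃mem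
  have hX₂t₃' : 0 < X₂ t₃' := hX₂pos t₃' (right_mem_Icc.2 (ht₂.trans ht₃.le))
  have hT₁ : T ∈ Icc t₃ T := right_mem_Icc.2 (ht₃.le.trans ht₃')
  have hT₂ : T ∈ Icc t₃' T := right_mem_Icc.2 ht₃'
  have key : SIR.invariant σf (X₁ T) (Y₁ T) < SIR.invariant σf (X₂ T) (Y₂ T) := calc
    _ = SIR.invariant σf (X₁ t₃) (Y₁ t₃) := sol₁f.invariant_eq hX₁t₃ T hT₁
    _ = SIR.invariant σf (X₂ t₃) (Y₂ t₃) := by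
      rw [hX (right_mem_Icc.2 ht₂), hY (right_mem_Icc.2 ht₂)]
    _ < SIR.invariant σf (X₂ t₃') (Y₂ t₃') :=
      (sol₂s.mono (Icc_subset_Icc_left ht₂)).strictMonoOn_invariant hγ hσsf
        (hX₂pos t₃ ht₃mem) (hY₂pos t₃ ht₃mem) (left_mem_Icc.2 ht₃.le)
        (right_mem_Icc.2 ht₃.le) ht₃
    _ = SIR.invariant σf (X₂ T) (Y₂ T) := (sol₂f.invariant_eq hX₂t₃' T hT₂).symm
  rw [one_div] at hz₁ hz₂
  refine ((strictMonoOn_mul_exp_neg_mul (hσs.trans_lt hσsf)).lt_iff_lt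
    (Ioo_subset_Icc_self hz₁.1) (Ioo_subset_Icc_self hz₂.1)).1 ?_
  rw [hz₁.2, hz₂.2,
    SIR.mul_exp_neg_mul_add_eq_exp_invariant _ _ (sol₁f.x_pos hX₁t₃ T hT₁),
    SIR.mul_exp_neg_mul_add_eq_exp_invariant _ _ (sol₂f.x_pos hX₂t₃' T hT₂)]
  exact Real.exp_lt_exp.2 key

/-- Extending the duration of the strict quarantine strictly increases the asymptotic
fraction of susceptibles.  Starting from `(x₂, y₂) ∈ D` at time `t₂`, the control is
`σ_s` on `[t₂, θ]` and `σ_f` on `(θ, T]`; the asymptotic susceptible fraction `z_θ` is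
the unique `z ∈ (0, 1/σ_f)` with `z e^{-σ_f z} = x_θ(T) e^{-σ_f (x_θ(T) + y_θ(T))}`.
If `t₃ < t₃'` then `z_{t₃} < z_{t₃'}`. -/
theorem longer_strict_quarantine_increases_xinf
    (γ σs σf t₂ t₃ t₃' T : ℝ) (hγ : 0 < γ) (hσs : 0 ≤ σs) (hσsf : σs < σf)
    (ht₂ : t₂ ≤ t₃) (ht₃ : t₃ < t₃') (ht₃' : t₃' ≤ T)
    (x₂ y₂ : ℝ) (hx₂ : 0 < x₂) (hy₂ : 0 < y₂) (hxy₂ : x₂ + y₂ ≤ 1)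
    (X₁ Y₁ X₂ Y₂ : ℝ → ℝ)
    (hX₁s : ∀ t ∈ Icc t₂ t₃,
      HasDerivWithinAt X₁ (-γ * σs * X₁ t * Y₁ t) (Icc t₂ t₃) t)
    (hY₁s : ∀ t ∈ Icc t₂ t₃,
      HasDerivWithinAt Y₁ (γ * σs * X₁ t * Y₁ t - γ * Y₁ t) (Icc t₂ t₃) t)
    (hX₁f : ∀ t ∈ Icc t₃ T,
      HasDerivWithinAt X₁ (-γ * σf * X₁ t * Y₁ t) (Icc t₃ T) t)
    (hY₁f : ∀ t ∈ Icc t₃ T,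
      HasDerivWithinAt Y₁ (γ * σf * X₁ t * Y₁ t - γ * Y₁ t) (Icc t₃ T) t)
    (hX₁0 : X₁ t₂ = x₂) (hY₁0 : Y₁ t₂ = y₂)
    (hX₂s : ∀ t ∈ Icc t₂ t₃',
      HasDerivWithinAt X₂ (-γ * σs * X₂ t * Y₂ t) (Icc t₂ t₃') t)
    (hY₂s : ∀ t ∈ Icc t₂ t₃',
      HasDerivWithinAt Y₂ (γ * σs * X₂ t * Y₂ t - γ * Y₂ t) (Icc t₂ t₃') t)
    (hX₂f : ∀ t ∈ Icc t₃' T,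
      HasDerivWithinAt X₂ (-γ * σf * X₂ t * Y₂ t) (Icc t₃' T) t)
    (hY₂f : ∀ t ∈ Icc t₃' T,
      HasDerivWithinAt Y₂ (γ * σf * X₂ t * Y₂ t - γ * Y₂ t) (Icc t₃' T) t)
    (hX₂0 : X₂ t₂ = x₂) (hY₂0 : Y₂ t₂ = y₂)
    (z₁ z₂ : ℝ)
    (hz₁ : z₁ ∈ Ioo 0 (1 / σf) ∧
      z₁ * Real.exp (-σf * z₁) = X₁ T * Real.exp (-σf * (X₁ T + Y₁ T)))
    (hz₂ : z₂ ∈ Ioo 0 (1 / σf) ∧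
      z₂ * Real.exp (-σf * z₂) = X₂ T * Real.exp (-σf * (X₂ T + Y₂ T))) :
    z₁ < z₂ :=
  longer_strict_quarantine_increases_xinf_general γ σs σf t₂ t₃ t₃' T hγ hσs hσsf ht₂ ht₃ ht₃' x₂ y₂
    hx₂ hy₂ X₁ Y₁ X₂ Y₂ hX₁s hY₁s hX₁f hY₁f hX₁0 hY₁0 hX₂s hY₂s hX₂f hY₂f hX₂0 hY₂0 z₁ z₂ hz₁ hz₂
end
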